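/- arXiv:2508.18685 — 7 statements merged into one kernel-verified Lean document; each statement's English description precedes it below -/
import Mathlib

section
/- Let d > 1 and let D ⊆ S^{d-1} be a finite set satisfying ∑_{x∈D} ⟨y,x⟩² = (|D|/d)⟨y,y⟩, ∑_{x∈D} ⟨y,x⟩⁴ = (3|D|/(d(d+2)))⟨y,y⟩², and ∑_{x∈D} ⟨y,x⟩⁶ = (15|D|/(d(d+2)(d+4)))⟨y,y⟩³ for all y ∈ ℝ^d (the moment conditions of a spherical 7-design). Then there is no vector α ∈ ℝ^d such that ⟨α,x⟩ ∈ {0,±1} for all x ∈ D; i.e., D is not of minimal type. -/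
/-! Since `⟪α, x⟫ ∈ {0, ±1}`, the power sums `∑ ⟪α, x⟫ ^ k` for `k = 2, 4, 6` coincide. Comparing
the moment identities at `y = α` then gives `d + 2 = 3 ‖α‖²` and `d + 4 = 5 ‖α‖²`, so `‖α‖ = 1`
and `d = 1`. -/

open scoped RealInnerProductSpace

lemma pow_add_two_eq_pow_of_eq_zero_or_one_or_neg_one {R : Type*} [Ring R] {a : R}
    (ha : a = 0 ∨ a = 1 ∨ a = -1) {n : ℕ} (hn : n ≠ 0) : a ^ (n + 2) = a ^ n := by
  rcases ha with rfl | rfl | rfl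
  · simp [hn]
  · simp
  · rw [pow_add, neg_one_sq, mul_one]

lemma add_two_eq_of_second_moment_eq_fourth {N d t : ℝ} (hN : N ≠ 0) (hd : 0 < d) (ht : t ≠ 0)
    (h : N / d * t = 3 * N / (d * (d + 2)) * t ^ 2) : d + 2 = 3 * t := by
  have hd2 : d + 2 ≠ 0 := by positivity
  field_simp at h
  linear_combination h

lemma add_four_eq_of_fourth_moment_eq_sixth {N d t : ℝ} (hN : N ≠ 0) (hd : 0 < d) (ht : t ≠ 0)
    (h : 3 * N / (d * (d + 2)) * t ^ 2 = 15 * N / (d * (d + 2) * (d + 4)) * t ^ 3) :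
    d + 4 = 5 * t := by
  have hd2 : d + 2 ≠ 0 := by positivity
  have hd4 : d + 4 ≠ 0 := by positivity
  field_simp at h
  linear_combination h / 3

theorem stmt1_general (d : ℕ) (hd : 1 < d) (D : Finset (EuclideanSpace ℝ (Fin d)))
    (hD : D.Nonempty)
    (h2 : ∀ y : EuclideanSpace ℝ (Fin d),
      ∑ x ∈ D, ⟪y, x⟫ ^ 2 = ((D.card : ℝ) / d) * ⟪y, y⟫)
    (h4 : ∀ y : EuclideanSpace ℝ (Fin d),
      ∑ x ∈ D, ⟪y, x⟫ ^ 4 = (3 * (D.card : ℝ) / (d * (d + 2))) * ⟪y, y⟫ ^ 2)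
    (h6 : ∀ y : EuclideanSpace ℝ (Fin d),
      ∑ x ∈ D, ⟪y, x⟫ ^ 6
        = (15 * (D.card : ℝ) / (d * (d + 2) * (d + 4))) * ⟪y, y⟫ ^ 3) :
    ¬ ∃ α : EuclideanSpace ℝ (Fin d), α ≠ 0 ∧
        ∀ x ∈ D, ⟪α, x⟫ = 0 ∨ ⟪α, x⟫ = 1 ∨ ⟪α, x⟫ = -1 := by
  rintro ⟨α, hα, hmin⟩
  have hN : (D.card : ℝ) ≠ 0 := by exact_mod_cast hD.card_pos.ne'
  have hd' : (1 : ℝ) < d := by exact_mod_cast hd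
  have ht : ⟪α, α⟫ ≠ 0 := inner_self_ne_zero.mpr hα
  have hsum (n : ℕ) (hn : n ≠ 0) : ∑ x ∈ D, ⟪α, x⟫ ^ (n + 2) = ∑ x ∈ D, ⟪α, x⟫ ^ n :=
    Finset.sum_congr rfl fun x hx => pow_add_two_eq_pow_of_eq_zero_or_one_or_neg_one (hmin x hx) hn
  have h24 : (d : ℝ) + 2 = 3 * ⟪α, α⟫ :=
    add_two_eq_of_second_moment_eq_fourth hN (by linarith) ht <| by
      rw [← h2, ← h4]; exact (hsum 2 two_ne_zero).symm
  have h46 : (d : ℝ) + 4 = 5 * ⟪α, α⟫ :=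
    add_four_eq_of_fourth_moment_eq_sixth hN (by linarith) ht <| by
      rw [← h4, ← h6]; exact (hsum 4 four_ne_zero).symm
  linarith

theorem stmt1 (d : ℕ) (hd : 1 < d) (D : Finset (EuclideanSpace ℝ (Fin d)))
    (hD : D.Nonempty)
    (hunit : ∀ x ∈ D, ‖x‖ = 1)
    (h2 : ∀ y : EuclideanSpace ℝ (Fin d),
      ∑ x ∈ D, ⟪y, x⟫ ^ 2 = ((D.card : ℝ) / d) * ⟪y, y⟫)
    (h4 : ∀ y : EuclideanSpace ℝ (Fin d),
      ∑ x ∈ D, ⟪y, x⟫ ^ 4 = (3 * (D.card : ℝ) / (d * (d + 2))) * ⟪y, y⟫ ^ 2)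
    (h6 : ∀ y : EuclideanSpace ℝ (Fin d),
      ∑ x ∈ D, ⟪y, x⟫ ^ 6
        = (15 * (D.card : ℝ) / (d * (d + 2) * (d + 4))) * ⟪y, y⟫ ^ 3) :
    ¬ ∃ α : EuclideanSpace ℝ (Fin d), α ≠ 0 ∧
        ∀ x ∈ D, ⟪α, x⟫ = 0 ∨ ⟪α, x⟫ = 1 ∨ ⟪α, x⟫ = -1 :=
  stmt1_general d hd D hD h2 h4 h6
end

section
/- The set of positive integers m such that m is odd, m ≢ 1 (mod 3), m+1 ≢ 0 (mod 8), and m(m+1) is square-free, is infinite. -/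
/-!
Take `m = 72 x + 21`: then `m` is odd, `3 ∣ m` and `m + 1 ≡ 6 (mod 8)`, and neither `4` nor `9`
divides `m (m + 1)`. A prime `p ≥ 5` with `p² ∣ m (m + 1)` divides `m` or `m + 1` twice, which puts
`x` in one of two residue classes mod `p²`. So among `L` consecutive values of `x` at most
`∑_{5 ≤ p ≤ K} 2 (L / p² + 1) ≤ L / 2 + 2 K` are bad, where `K²` bounds the values of `m + 1`;
here `∑_{p > 4} 1 / p² < 1 / 4`. As `K = O(√L)`, a good `x` exists once `L` is large.
-/

open Finset

namespace Nat

theorem card_filter_range_dvd_mul_add_le {q a : ℕ} (hqa : q.Coprime a) (c L : ℕ) :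
    #{s ∈ range L | q ∣ a * s + c} ≤ L / q + 1 := by
  calc #{s ∈ range L | q ∣ a * s + c} ≤ #(range (L / q + 1)) := by
        refine card_le_card_of_injOn (· / q) (fun s hs ↦ ?_) fun s hs t ht hst ↦ ?_
        · rw [mem_coe, mem_filter, mem_range] at hs
          exact mem_coe.2 <| mem_range.2 <| lt_succ_of_le (Nat.div_le_div_right hs.1.le)
        · rw [mem_coe, mem_filter] at hs ht
          have hmod : s ≡ t [MOD q] := ModEq.cancel_left_of_coprime hqa <|
            ModEq.add_right_cancel' c <| (modEq_zero_iff_dvd.2 hs.2).trans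
              (modEq_zero_iff_dvd.2 ht.2).symm
          rw [← div_add_mod s q, ← div_add_mod t q, hmod, show s / q = t / q from hst]
    _ = L / q + 1 := card_range _

theorem card_filter_range_not_squarefree_mul_add_le {a c L K : ℕ} (hc : 0 < c)
    (ha : ∀ p, p.Prime → p ∣ a → p ^ 2 ∣ a ∧ ¬ p ^ 2 ∣ c) (hK : a * L + c ≤ K ^ 2) :
    #{s ∈ range L | ¬ Squarefree (a * s + c)} ≤
      ∑ p ∈ Iic K with p.Prime ∧ ¬ p ∣ a, (L / p ^ 2 + 1) := by
  calc #{s ∈ range L | ¬ Squarefree (a * s + c)}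
      ≤ #({p ∈ Iic K | p.Prime ∧ ¬ p ∣ a}.biUnion fun p ↦ {s ∈ range L | p ^ 2 ∣ a * s + c}) := by
        refine card_le_card fun s hs ↦ ?_
        obtain ⟨hsL, hs⟩ := mem_filter.1 hs
        obtain ⟨p, hp, hdvd⟩ : ∃ p, p.Prime ∧ p ^ 2 ∣ a * s + c := by
          simpa [squarefree_iff_prime_squarefree, ← pow_two] using hs
        have hpa : ¬ p ∣ a := fun hpa ↦ (ha p hp hpa).2 <|
          (Nat.dvd_add_right (dvd_mul_of_dvd_left (ha p hp hpa).1 s)).1 hdvd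
        have hpK : p ≤ K := by
          refine (Nat.pow_le_pow_iff_left two_ne_zero).1 ((le_of_dvd (by positivity) hdvd).trans ?_)
          exact le_trans (by gcongr; exact (mem_range.1 hsL).le) hK
        simp only [mem_biUnion, mem_filter, mem_Iic]
        exact ⟨p, ⟨hpK, hp, hpa⟩, hsL, hdvd⟩
    _ ≤ ∑ p ∈ Iic K with p.Prime ∧ ¬ p ∣ a, #{s ∈ range L | p ^ 2 ∣ a * s + c} :=
        card_biUnion_le
    _ ≤ ∑ p ∈ Iic K with p.Prime ∧ ¬ p ∣ a, (L / p ^ 2 + 1) := by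
        refine sum_le_sum fun p hp ↦ card_filter_range_dvd_mul_add_le ?_ c L
        obtain ⟨-, hp, hpa⟩ := mem_filter.1 hp
        exact ((hp.coprime_iff_not_dvd).2 hpa).pow_left 2

theorem four_mul_sum_div_sq_le {P : Finset ℕ} (hP : ∀ p ∈ P, 4 < p) (L : ℕ) :
    4 * ∑ p ∈ P, L / p ^ 2 ≤ L := by
  set n := 4 + P.sup id
  have hPn : P ⊆ Ioc 4 n := fun p hp ↦
    mem_Ioc.2 ⟨hP p hp, (le_sup (f := id) hp).trans (Nat.le_add_left _ _)⟩
  suffices (4 * ∑ p ∈ P, L / p ^ 2 : ℚ) ≤ L by exact_mod_cast this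
  calc (4 * ∑ p ∈ P, L / p ^ 2 : ℚ)
      ≤ 4 * ∑ p ∈ P, (L : ℚ) * ((p : ℚ) ^ 2)⁻¹ := by
        push_cast
        gcongr with p
        exact cast_div_le.trans_eq (div_eq_mul_inv _ _)
    _ ≤ 4 * ((L : ℚ) * ∑ i ∈ Ioc 4 n, ((i : ℚ) ^ 2)⁻¹) := by
        rw [← mul_sum]
        gcongr
    _ ≤ 4 * ((L : ℚ) * ((4 : ℕ) : ℚ)⁻¹) := by
        gcongr
        exact (sum_Ioc_inv_sq_le_sub four_ne_zero (le_add_right 4 _)).trans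
          (sub_le_self _ (by positivity))
    _ = L := by push_cast; ring

theorem four_mul_card_filter_range_not_squarefree_mul_add_le {a c L K : ℕ} (h6 : 6 ∣ a)
    (ha : ∀ p, p.Prime → p ∣ a → p ^ 2 ∣ a ∧ ¬ p ^ 2 ∣ c) (hK : a * L + c ≤ K ^ 2) :
    4 * #{s ∈ range L | ¬ Squarefree (a * s + c)} ≤ L + 4 * K := by
  have h2a : 2 ∣ a := dvd_trans ⟨3, rfl⟩ h6
  have h3a : 3 ∣ a := dvd_trans ⟨2, rfl⟩ h6
  have hc : 0 < c := pos_of_ne_zero fun hc ↦ (ha 2 prime_two h2a).2 (hc ▸ dvd_zero _)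
  have hP : {p ∈ Iic K | p.Prime ∧ ¬ p ∣ a} ⊆ Ioc 4 K := by
    intro p hp
    obtain ⟨hpK, hp, hpa⟩ := mem_filter.1 hp
    have h2 : p ≠ 2 := by rintro rfl; exact hpa h2a
    have h3 : p ≠ 3 := by rintro rfl; exact hpa h3a
    have h4 : p ≠ 4 := by rintro rfl; exact absurd hp (by decide)
    exact mem_Ioc.2 ⟨by have := hp.two_le; omega, mem_Iic.1 hpK⟩
  calc 4 * #{s ∈ range L | ¬ Squarefree (a * s + c)}
      ≤ 4 * ∑ p ∈ Iic K with p.Prime ∧ ¬ p ∣ a, (L / p ^ 2 + 1) := by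
        gcongr
        exact card_filter_range_not_squarefree_mul_add_le hc ha hK
    _ = 4 * ∑ p ∈ Iic K with p.Prime ∧ ¬ p ∣ a, L / p ^ 2 +
          4 * #{p ∈ Iic K | p.Prime ∧ ¬ p ∣ a} := by
        rw [sum_add_distrib, card_eq_sum_ones, mul_add]
    _ ≤ L + 4 * K := by
        gcongr
        · exact four_mul_sum_div_sq_le (fun p hp ↦ (mem_Ioc.1 (hP hp)).1) L
        · exact (card_le_card hP).trans (by simp)

theorem prime_dvd_seventy_two {p : ℕ} (hp : p.Prime) (h : p ∣ 72) : p = 2 ∨ p = 3 := by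
  rcases hp.dvd_mul.1 (show p ∣ 2 ^ 3 * 3 ^ 2 from h) with h | h
  · exact .inl ((prime_dvd_prime_iff_eq hp prime_two).1 (hp.dvd_of_dvd_pow h))
  · exact .inr ((prime_dvd_prime_iff_eq hp prime_three).1 (hp.dvd_of_dvd_pow h))

theorem exists_gt_mod_seventy_two_eq_and_squarefree_mul_succ (N : ℕ) :
    ∃ m, N < m ∧ m % 72 = 21 ∧ Squarefree (m * (m + 1)) := by
  obtain ⟨T, hNT, hT⟩ : ∃ T, N < T ∧ 52 < T := ⟨N + 53, by omega, by omega⟩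
  obtain ⟨L, hL⟩ : ∃ L, L = T ^ 2 := ⟨_, rfl⟩
  have hNL : N < L := by nlinarith
  have hKL : 4 * (13 * T) < L := by nlinarith
  have hbad : ∀ i, i = 21 ∨ i = 22 →
      4 * #{s ∈ range L | ¬ Squarefree (72 * s + (72 * L + i))} ≤ L + 4 * (13 * T) := by
    intro i hi
    refine four_mul_card_filter_range_not_squarefree_mul_add_le (by norm_num) ?_ ?_
    · intro p hp hp72
      rcases prime_dvd_seventy_two hp hp72 with rfl | rfl <;> norm_num <;> omega
    · have : i ≤ 22 := by omega
      nlinarith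
  obtain ⟨s, hs, hgood⟩ := exists_mem_notMem_of_card_lt_card (t := range L) <|
    (card_union_le {s ∈ range L | ¬ Squarefree (72 * s + (72 * L + 21))}
      {s ∈ range L | ¬ Squarefree (72 * s + (72 * L + 22))}).trans_lt <| by
    have h21 := hbad 21 (.inl rfl)
    have h22 := hbad 22 (.inr rfl)
    rw [card_range]
    omega
  simp only [mem_union, mem_filter, not_or, not_and, not_not] at hgood
  refine ⟨72 * s + (72 * L + 21), by omega, by omega,
    squarefree_mul_iff.2 ⟨?_, hgood.1 hs, hgood.2 hs⟩⟩
  exact coprime_self_add_right.2 (coprime_one_right _)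

end Nat

theorem stmt4 :
    {m : ℕ | 0 < m ∧ Odd m ∧ m % 3 ≠ 1 ∧ (m + 1) % 8 ≠ 0 ∧
      Squarefree (m * (m + 1))}.Infinite := by
  refine Set.infinite_of_forall_exists_gt fun N ↦ ?_
  obtain ⟨m, hNm, hm, hsq⟩ := Nat.exists_gt_mod_seventy_two_eq_and_squarefree_mul_succ N
  exact ⟨m, ⟨by omega, Nat.odd_iff.2 (by omega), by omega, by omega, hsq⟩, hNm⟩
end

section
/- Let X ⊆ S^{d-1} be a finite set with |X| = n > d. Then the coherence μ(X) := max over distinct pairs x ≠ y in X of |⟨x,y⟩| satisfies μ(X) ≥ √((n−d)/(d(n−1))) (the Welch bound). -/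
/-! The frame operator `S = ∑ₓ x xᵀ` of `n` unit vectors in `ℝ^d` has trace `n`, and its squared
Frobenius norm is the frame potential `∑ₓ ∑ᵧ ⟪x, y⟫²`. Cauchy–Schwarz on the diagonal of `S`
gives `n² ≤ d ∑ₓ ∑ᵧ ⟪x, y⟫²`. The diagonal terms `x = y` contribute `n` and each of the `n(n-1)`
others is at most `μ²`, so `n² ≤ d (n(n-1) μ² + n)`, which rearranges to the Welch bound. -/

open scoped RealInnerProductSpace
open Finset

theorem Matrix.sq_trace_le_card_mul_sum_sq {ι R : Type*} [Fintype ι] [Semiring R] [LinearOrder R]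
    [IsStrictOrderedRing R] [ExistsAddOfLE R] (A : Matrix ι ι R) :
    A.trace ^ 2 ≤ Fintype.card ι * ∑ i, ∑ j, A i j ^ 2 := calc
  A.trace ^ 2 ≤ Fintype.card ι * ∑ i, A i i ^ 2 := sq_sum_le_card_mul_sum_sq
  _ ≤ Fintype.card ι * ∑ i, ∑ j, A i j ^ 2 := by
    gcongr with i
    exact single_le_sum (f := fun j => A i j ^ 2) (fun _ _ => sq_nonneg _) (mem_univ i)

theorem Finset.sum_sum_eq_sum_offDiag_add_sum {α M : Type*} [DecidableEq α] [AddCommMonoid M]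
    (s : Finset α) (f : α → α → M) :
    ∑ x ∈ s, ∑ y ∈ s, f x y = ∑ p ∈ s.offDiag, f p.1 p.2 + ∑ x ∈ s, f x x := by
  rw [← sum_product', ← diag_union_offDiag, sum_union (disjoint_diag_offDiag s), add_comm,
    sum_diag]

section Frame

variable {ι : Type*} [Fintype ι]

def frameMatrix (X : Finset (EuclideanSpace ℝ ι)) : Matrix ι ι ℝ :=
  Matrix.of fun i j => ∑ x ∈ X, x i * x j

theorem trace_frameMatrix (X : Finset (EuclideanSpace ℝ ι)) :
    (frameMatrix X).trace = ∑ x ∈ X, ‖x‖ ^ 2 := by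
  simp only [Matrix.trace, Matrix.diag, frameMatrix, Matrix.of_apply, EuclideanSpace.norm_sq_eq]
  rw [sum_comm]
  simp [sq]

theorem sum_sum_inner_sq_eq_sum_sum_frameMatrix_sq (X : Finset (EuclideanSpace ℝ ι)) :
    ∑ x ∈ X, ∑ y ∈ X, ⟪x, y⟫ ^ 2 = ∑ i, ∑ j, frameMatrix X i j ^ 2 := by
  simp only [frameMatrix, Matrix.of_apply, PiLp.inner_apply, RCLike.inner_apply, conj_trivial,
    sq, sum_mul_sum, ← sum_product' X X, ← sum_product' (univ : Finset ι) univ]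
  rw [sum_comm]
  exact sum_congr rfl fun _ _ => sum_congr rfl fun _ _ => by ring

theorem sq_sum_norm_sq_le_card_mul_sum_sum_inner_sq (X : Finset (EuclideanSpace ℝ ι)) :
    (∑ x ∈ X, ‖x‖ ^ 2) ^ 2 ≤ Fintype.card ι * ∑ x ∈ X, ∑ y ∈ X, ⟪x, y⟫ ^ 2 := by
  rw [← trace_frameMatrix, sum_sum_inner_sq_eq_sum_sum_frameMatrix_sq]
  exact (frameMatrix X).sq_trace_le_card_mul_sum_sq

theorem welch_bound_sq {X : Finset (EuclideanSpace ℝ ι)} (hunit : ∀ x ∈ X, ‖x‖ = 1)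
    (hcard : Fintype.card ι < X.card) {M : ℝ} (hM : ∀ p ∈ X.offDiag, ⟪p.1, p.2⟫ ^ 2 ≤ M) :
    ((X.card : ℝ) - Fintype.card ι) / (Fintype.card ι * ((X.card : ℝ) - 1)) ≤ M := by
  classical
  have hnorm : ∑ x ∈ X, ‖x‖ ^ 2 = X.card := by
    rw [sum_eq_card_nsmul fun x hx => by rw [hunit x hx, one_pow], nsmul_one]
  have hdiag : ∑ x ∈ X, ⟪x, x⟫ ^ 2 = X.card := by
    rw [sum_eq_card_nsmul (b := 1) fun x hx => by
      rw [real_inner_self_eq_norm_sq, hunit x hx, one_pow, one_pow], nsmul_one]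
  have hoff : ∑ p ∈ X.offDiag, ⟪p.1, p.2⟫ ^ 2 ≤ ((X.card : ℝ) * X.card - X.card) * M := calc
    _ ≤ X.offDiag.card • M := sum_le_card_nsmul _ _ _ hM
    _ = ((X.card : ℝ) * X.card - X.card) * M := by
      rw [nsmul_eq_mul, offDiag_card, Nat.cast_sub (Nat.le_mul_self _), Nat.cast_mul]
  have hframe := sq_sum_norm_sq_le_card_mul_sum_sum_inner_sq X
  rw [hnorm, sum_sum_eq_sum_offDiag_add_sum, hdiag] at hframe
  have hdn : (Fintype.card ι : ℝ) + 1 ≤ X.card := by exact_mod_cast hcard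
  have hd : (0 : ℝ) < Fintype.card ι :=
    pos_of_mul_pos_left (hframe.trans_lt' (by nlinarith)) (by positivity)
  rw [div_le_iff₀ (by nlinarith)]
  nlinarith

end Frame

theorem stmt5_general (d : ℕ) (X : Finset (EuclideanSpace ℝ (Fin d)))
    (hunit : ∀ x ∈ X, ‖x‖ = 1) (hcard : d < X.card) :
    ∃ x ∈ X, ∃ y ∈ X, x ≠ y ∧
      Real.sqrt (((X.card : ℝ) - d) / (d * ((X.card : ℝ) - 1))) ≤ |⟪x, y⟫| := by
  obtain ⟨x₀, hx₀⟩ := card_pos.mp (d.zero_le.trans_lt hcard)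
  have hd : d ≠ 0 := by
    rintro rfl
    simpa [Subsingleton.elim x₀ 0] using hunit x₀ hx₀
  have hX : X.offDiag.Nonempty := by
    rw [← coe_nonempty, coe_offDiag, Set.offDiag_nonempty]
    exact one_lt_card_iff_nontrivial.mp (by omega)
  obtain ⟨p, hp, hmax⟩ := X.offDiag.exists_max_image (fun p => ⟪p.1, p.2⟫ ^ 2) hX
  obtain ⟨hp₁, hp₂, hp⟩ := mem_offDiag.mp hp
  refine ⟨p.1, hp₁, p.2, hp₂, hp, ?_⟩
  rw [← Real.sqrt_sq_eq_abs]
  gcongr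
  simpa using welch_bound_sq hunit (by simpa using hcard) hmax

theorem stmt5 (d : ℕ) (hd : 0 < d) (X : Finset (EuclideanSpace ℝ (Fin d)))
    (hunit : ∀ x ∈ X, ‖x‖ = 1) (hcard : d < X.card) :
    ∃ x ∈ X, ∃ y ∈ X, x ≠ y ∧
      Real.sqrt (((X.card : ℝ) - d) / (d * ((X.card : ℝ) - 1))) ≤ |⟪x, y⟫| :=
  stmt5_general d X hunit hcard
end

section
/- Let X ⊆ S^{d-1} be a finite set, α = e₁ the first standard basis vector with ±α ∉ X, and B = {⟨α,x⟩ : x ∈ X} = {β₁,…,β_s} with each |βᵢ| < 1. For each i define the derived code D_{βᵢ} = {ξ ∈ S^{d-2} : (βᵢ, √(1−βᵢ²)·ξ) ∈ X}. Then for all i, j, every inner product between a point of D_{βᵢ} and a point of D_{βⱼ} (as points of S^{d-2}) lies in { (γ − βᵢβⱼ)/√((1−βᵢ²)(1−βⱼ²)) : γ ∈ A(X) ∪ {1} }, where A(X) is the set of inner products between distinct points of X. -/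
open scoped RealInnerProductSpace

noncomputable def liftPt {d : ℕ} (β : ℝ) (ξ : EuclideanSpace ℝ (Fin d)) :
    EuclideanSpace ℝ (Fin (d + 1)) :=
  (WithLp.toLp 2 (Fin.cons β fun i => Real.sqrt (1 - β ^ 2) * ξ i : Fin (d + 1) → ℝ) :
    EuclideanSpace ℝ (Fin (d + 1)))

lemma inner_liftPt {d : ℕ} (β β' : ℝ) (ξ η : EuclideanSpace ℝ (Fin d)) :
    ⟪liftPt β ξ, liftPt β' η⟫ =
      β * β' + Real.sqrt (1 - β ^ 2) * Real.sqrt (1 - β' ^ 2) * ⟪ξ, η⟫ := by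
  simp only [liftPt, EuclideanSpace.inner_eq_star_dotProduct, dotProduct, Fin.sum_univ_succ,
    Fin.cons_zero, Fin.cons_succ, star_trivial, Finset.mul_sum]
  congr 1
  · ring
  · exact Finset.sum_congr rfl fun i _ => by ring

lemma inner_eq_inner_liftPt_sub_mul_div {d : ℕ} {β β' : ℝ} (hβ : |β| < 1) (hβ' : |β'| < 1)
    (ξ η : EuclideanSpace ℝ (Fin d)) :
    ⟪ξ, η⟫ = (⟪liftPt β ξ, liftPt β' η⟫ - β * β') / Real.sqrt ((1 - β ^ 2) * (1 - β' ^ 2)) := by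
  have hpos : 0 < 1 - β ^ 2 := by nlinarith [sq_abs β, abs_nonneg β]
  have hpos' : 0 < 1 - β' ^ 2 := by nlinarith [sq_abs β', abs_nonneg β']
  have hsqrt : 0 < Real.sqrt (1 - β ^ 2) * Real.sqrt (1 - β' ^ 2) :=
    mul_pos (Real.sqrt_pos.2 hpos) (Real.sqrt_pos.2 hpos')
  rw [inner_liftPt, Real.sqrt_mul hpos.le, add_sub_cancel_left, mul_div_cancel_left₀ _ hsqrt.ne']

lemma inner_mem_innerProducts_or_eq_one {E : Type*} [NormedAddCommGroup E]
    [InnerProductSpace ℝ E] {X : Set E} (hunit : ∀ x ∈ X, ‖x‖ = 1) {x y : E}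
    (hx : x ∈ X) (hy : y ∈ X) :
    (∃ x' ∈ X, ∃ y' ∈ X, x' ≠ y' ∧ ⟪x', y'⟫ = ⟪x, y⟫) ∨ ⟪x, y⟫ = 1 := by
  by_cases hxy : x = y
  · right
    rw [hxy, real_inner_self_eq_norm_sq, hunit y hy, one_pow]
  · exact Or.inl ⟨x, hx, y, hy, hxy, rfl⟩

theorem stmt7_general (d : ℕ) (X : Set (EuclideanSpace ℝ (Fin (d + 1))))
    (hunit : ∀ x ∈ X, ‖x‖ = 1)
    (β β' : ℝ) (hβ : |β| < 1) (hβ' : |β'| < 1)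
    (ξ η : EuclideanSpace ℝ (Fin d))
    (hξ : liftPt β ξ ∈ X) (hη : liftPt β' η ∈ X) :
    ∃ γ : ℝ, ((∃ x ∈ X, ∃ y ∈ X, x ≠ y ∧ ⟪x, y⟫ = γ) ∨ γ = 1) ∧
      ⟪ξ, η⟫ = (γ - β * β') / Real.sqrt ((1 - β ^ 2) * (1 - β' ^ 2)) :=
  ⟨⟪liftPt β ξ, liftPt β' η⟫, inner_mem_innerProducts_or_eq_one hunit hξ hη,
    inner_eq_inner_liftPt_sub_mul_div hβ hβ' ξ η⟩

theorem stmt7 (d : ℕ) (X : Set (EuclideanSpace ℝ (Fin (d + 1)))) (hfin : X.Finite)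
    (hunit : ∀ x ∈ X, ‖x‖ = 1)
    (α : EuclideanSpace ℝ (Fin (d + 1))) (hαdef : α = EuclideanSpace.single 0 1)
    (hα : α ∉ X) (hα' : -α ∉ X)
    (β β' : ℝ) (hβ : |β| < 1) (hβ' : |β'| < 1)
    (ξ η : EuclideanSpace ℝ (Fin d)) (hξn : ‖ξ‖ = 1) (hηn : ‖η‖ = 1)
    (hξ : liftPt β ξ ∈ X) (hη : liftPt β' η ∈ X) :
    ∃ γ : ℝ, ((∃ x ∈ X, ∃ y ∈ X, x ≠ y ∧ ⟪x, y⟫ = γ) ∨ γ = 1) ∧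
      ⟪ξ, η⟫ = (γ - β * β') / Real.sqrt ((1 - β ^ 2) * (1 - β' ^ 2)) :=
  stmt7_general d X hunit β β' hβ hβ' ξ η hξ hη
end

section
/- Let X be a spherical t-design in S^{d-1} with α = e₁, ±α ∉ X, and B = {⟨α,x⟩ : x ∈ X} having exactly s elements, all in (−1,1). Then for each β ∈ B, the derived code D_β = {ξ ∈ S^{d-2} : (β, √(1−β²)·ξ) ∈ X} is a spherical (t+1−s)-design in S^{d-2}. -/
/-!
Let `B` be the set of first coordinates of `X`, so `#B = s`, and `c = √(1 - β²)`. An orthogonal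
map `g` of `ℝᵈ` extends to one of `ℝᵈ⁺¹` fixing `e₁`. For `f` of degree at most `t + 1 - s`, the
polynomial `F(x) = f(c⁻¹ (x₂, …, x_{d+1})) · ∏_{b ∈ B, b ≠ β} (x₁ - b)` has degree at most `t` and
vanishes on every point of `X` outside the slice `x₁ = β`. Hence the design identity of `X` for
`F` and the extended `g` is the design identity of `D_β` for `f` and `g`, multiplied by the
nonzero constant `∏_{b ≠ β} (β - b)`. Constant `f` (the only case when `s > t + 1`) is trivial.
-/

open scoped RealInnerProductSpace

/-- A finite nonempty set of unit vectors is a spherical `t`-design if, for every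
polynomial of total degree at most `t`, the sum of its values over the set is invariant
under the action of the orthogonal group. -/
def IsSphericalDesign {m : ℕ} (t : ℕ) (Y : Finset (EuclideanSpace ℝ (Fin m))) : Prop :=
  Y.Nonempty ∧ (∀ y ∈ Y, ‖y‖ = 1) ∧
    ∀ f : MvPolynomial (Fin m) ℝ, f.totalDegree ≤ t →
      ∀ g : EuclideanSpace ℝ (Fin m) ≃ₗᵢ[ℝ] EuclideanSpace ℝ (Fin m),
        ∑ y ∈ Y, MvPolynomial.eval (fun i => g y i) f
          = ∑ y ∈ Y, MvPolynomial.eval (fun i => y i) f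

namespace MvPolynomial

theorem totalDegree_bind₁_le {σ τ R : Type*} [CommSemiring R] (g : σ → MvPolynomial τ R)
    (hg : ∀ i, (g i).totalDegree ≤ 1) (f : MvPolynomial σ R) :
    (bind₁ g f).totalDegree ≤ f.totalDegree := by
  conv_lhs => rw [f.as_sum, map_sum]
  refine totalDegree_finsetSum_le fun m hm => ?_
  rw [bind₁_monomial]
  calc (C (coeff m f) * m.prod fun i k => g i ^ k).totalDegree
      ≤ ∑ i ∈ m.support, (g i ^ m i).totalDegree :=
        (totalDegree_mul _ _).trans <| by
          rw [totalDegree_C, zero_add]; exact totalDegree_finsetProd _ _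
    _ ≤ ∑ i ∈ m.support, m i := Finset.sum_le_sum fun i _ =>
        (totalDegree_pow _ _).trans (by simpa using Nat.mul_le_mul_left (m i) (hg i))
    _ ≤ f.totalDegree := le_totalDegree hm

theorem totalDegree_prod_X_sub_C_le {σ R : Type*} [CommRing R] [Nontrivial R] (i : σ)
    (S : Finset R) : (∏ b ∈ S, (X i - C b : MvPolynomial σ R)).totalDegree ≤ S.card :=
  (totalDegree_finsetProd _ _).trans <| by
    simpa using Finset.sum_le_card_nsmul S _ 1 fun b _ =>
      (totalDegree_sub_C_le _ _).trans (totalDegree_X (R := R) i).le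

end MvPolynomial

theorem Finset.sum_mul_prod_erase_image_sub {ι R : Type*} [CommRing R] [DecidableEq R]
    (s : Finset ι) (h p : ι → R) (β : R) :
    ∑ x ∈ s, p x * ∏ b ∈ (s.image h).erase β, (h x - b)
      = (∑ x ∈ s with h x = β, p x) * ∏ b ∈ (s.image h).erase β, (β - b) := by
  rw [← sum_filter_add_sum_filter_not s (fun x => h x = β), sum_mul]
  rw [sum_eq_zero (s := s.filter (h · ≠ β)) fun x hx => ?_, add_zero]
  · exact sum_congr rfl fun x hx => by rw [(mem_filter.mp hx).2]
  obtain ⟨hxX, hxβ⟩ := mem_filter.mp hx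
  rw [prod_eq_zero (mem_erase.mpr ⟨hxβ, mem_image_of_mem h hxX⟩) (sub_self _), mul_zero]

namespace EuclideanSpace

variable {n : ℕ}

def tail : EuclideanSpace ℝ (Fin (n + 1)) →ₗ[ℝ] EuclideanSpace ℝ (Fin n) where
  toFun x := WithLp.toLp 2 fun i => x i.succ
  map_add' _ _ := rfl
  map_smul' _ _ := rfl

@[simp]
theorem tail_apply (x : EuclideanSpace ℝ (Fin (n + 1))) (i : Fin n) : tail x i = x i.succ := rfl

theorem tail_toLp_cons (a : ℝ) (y : EuclideanSpace ℝ (Fin n)) :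
    tail (WithLp.toLp 2 (Fin.cons a y : Fin (n + 1) → ℝ)) = y :=
  rfl

theorem norm_sq_eq_sq_add_norm_tail_sq (x : EuclideanSpace ℝ (Fin (n + 1))) :
    ‖x‖ ^ 2 = x 0 ^ 2 + ‖tail x‖ ^ 2 := by
  simp [real_norm_sq_eq, Fin.sum_univ_succ]

theorem eq_of_apply_zero_eq_of_tail_eq {x y : EuclideanSpace ℝ (Fin (n + 1))} (h0 : x 0 = y 0)
    (htail : tail x = tail y) : x = y := by
  ext i
  cases i using Fin.cases with
  | zero => exact h0
  | succ j => simpa using congrArg (· j) htail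

noncomputable def consIsometry (g : EuclideanSpace ℝ (Fin n) ≃ₗᵢ[ℝ] EuclideanSpace ℝ (Fin n)) :
    EuclideanSpace ℝ (Fin (n + 1)) ≃ₗᵢ[ℝ] EuclideanSpace ℝ (Fin (n + 1)) :=
  LinearIsometry.toLinearIsometryEquiv
    { toFun x := WithLp.toLp 2 (Fin.cons (x 0) (g (tail x)))
      map_add' x y := by ext i; cases i using Fin.cases <;> simp
      map_smul' a x := by ext i; cases i using Fin.cases <;> simp
      norm_map' x := by
        rw [← sq_eq_sq₀ (norm_nonneg _) (norm_nonneg _), norm_sq_eq_sq_add_norm_tail_sq x,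
          norm_sq_eq_sq_add_norm_tail_sq]
        simp [tail_toLp_cons] }
    rfl

@[simp]
theorem consIsometry_apply_zero (g : EuclideanSpace ℝ (Fin n) ≃ₗᵢ[ℝ] EuclideanSpace ℝ (Fin n))
    (x : EuclideanSpace ℝ (Fin (n + 1))) : consIsometry g x 0 = x 0 :=
  rfl

@[simp]
theorem tail_consIsometry (g : EuclideanSpace ℝ (Fin n) ≃ₗᵢ[ℝ] EuclideanSpace ℝ (Fin n))
    (x : EuclideanSpace ℝ (Fin (n + 1))) : tail (consIsometry g x) = g (tail x) :=
  rfl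

end EuclideanSpace

open EuclideanSpace MvPolynomial Finset

namespace IsSphericalDesign

variable {d t : ℕ} {Y : Finset (EuclideanSpace ℝ (Fin (d + 1)))}

theorem sum_filter_eval_smul_tail_invariant (hY : IsSphericalDesign t Y) {β : ℝ}
    (hβ : β ∈ Y.image (· 0)) (c : ℝ) (f : MvPolynomial (Fin d) ℝ)
    (hf : f.totalDegree + ((Y.image (· 0)).card - 1) ≤ t)
    (g : EuclideanSpace ℝ (Fin d) ≃ₗᵢ[ℝ] EuclideanSpace ℝ (Fin d)) :
    ∑ y ∈ Y with y 0 = β, eval (fun i => g (c • tail y) i) f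
      = ∑ y ∈ Y with y 0 = β, eval (fun i => (c • tail y) i) f := by
  set B := Y.image (· 0)
  let F : MvPolynomial (Fin (d + 1)) ℝ :=
    bind₁ (fun i => C c * X i.succ) f * ∏ b ∈ B.erase β, (X 0 - C b)
  have hFdeg : F.totalDegree ≤ t := by
    have hlin : ∀ i : Fin d, (C c * X i.succ : MvPolynomial (Fin (d + 1)) ℝ).totalDegree ≤ 1 :=
      fun i => (totalDegree_mul _ _).trans (by simp)
    have h1 := totalDegree_bind₁_le _ hlin f
    have h2 := totalDegree_prod_X_sub_C_le (R := ℝ) (0 : Fin (d + 1)) (B.erase β)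
    rw [card_erase_of_mem hβ] at h2
    exact (totalDegree_mul _ _).trans ((add_le_add h1 h2).trans (by omega))
  have hF : ∀ y : EuclideanSpace ℝ (Fin (d + 1)),
      eval (fun i => y i) F = eval (fun i => (c • tail y) i) f * ∏ b ∈ B.erase β, (y 0 - b) := by
    intro y
    have heval : eval (fun i => y i) (bind₁ (fun i => C c * X i.succ) f)
        = eval (fun i => eval (fun i => y i) (C c * X i.succ)) f :=
      eval₂Hom_bind₁ _ _ _ _
    simp [F, heval]
  have hP : ∏ b ∈ B.erase β, (β - b) ≠ 0 :=
    prod_ne_zero_iff.mpr fun b hb => sub_ne_zero.mpr (ne_of_mem_erase hb).symm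
  have hinv := hY.2.2 F hFdeg (consIsometry g)
  simp only [hF, consIsometry_apply_zero, tail_consIsometry] at hinv
  rw [sum_mul_prod_erase_image_sub, sum_mul_prod_erase_image_sub] at hinv
  simpa [map_smul] using mul_right_cancel₀ hP hinv

theorem image_smul_tail_filter [DecidableEq (EuclideanSpace ℝ (Fin d))]
    (hY : IsSphericalDesign t Y) {β : ℝ} (hβ : β ∈ Y.image (· 0)) (hβ1 : |β| < 1) :
    IsSphericalDesign (t + 1 - (Y.image (· 0)).card)
      ((Y.filter (· 0 = β)).image fun y => (√(1 - β ^ 2))⁻¹ • tail y) := by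
  set c := √(1 - β ^ 2)
  have hβ2 : 0 < 1 - β ^ 2 := by nlinarith [sq_abs β, abs_nonneg β]
  have hc : 0 < c := Real.sqrt_pos.mpr hβ2
  have hinj : Set.InjOn (fun y => c⁻¹ • tail y)
      (Y.filter (· 0 = β) : Set (EuclideanSpace ℝ (Fin (d + 1)))) := by
    intro x hx y hy hxy
    refine eq_of_apply_zero_eq_of_tail_eq ?_ (smul_right_injective _ (inv_ne_zero hc.ne') hxy)
    rw [(mem_filter.mp hx).2, (mem_filter.mp hy).2]
  refine ⟨?_, ?_, fun f hf g => ?_⟩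
  · obtain ⟨y, hy, rfl⟩ := mem_image.mp hβ
    exact ⟨_, mem_image_of_mem _ (mem_filter.mpr ⟨hy, rfl⟩)⟩
  · simp only [mem_image, mem_filter]
    rintro _ ⟨y, ⟨hyY, rfl⟩, rfl⟩
    have hy := norm_sq_eq_sq_add_norm_tail_sq y
    rw [hY.2.1 y hyY] at hy
    have htail : ‖tail y‖ = c := by
      rw [← Real.sqrt_sq (norm_nonneg (tail y))]
      congr 1
      linarith
    rw [norm_smul, htail, norm_inv, Real.norm_of_nonneg hc.le, inv_mul_cancel₀ hc.ne']
  · rw [sum_image hinj, sum_image hinj]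
    by_cases hf0 : f.totalDegree = 0
    · rw [totalDegree_eq_zero_iff_eq_C.mp hf0]
      simp
    · have hcard := card_pos.mpr ⟨β, hβ⟩
      exact hY.sum_filter_eval_smul_tail_invariant hβ _ f (by omega) g

end IsSphericalDesign

theorem stmt8_general (d t : ℕ) [DecidableEq (EuclideanSpace ℝ (Fin d))]
    (X : Finset (EuclideanSpace ℝ (Fin (d + 1))))
    (hdesign : IsSphericalDesign t X)
    (α : EuclideanSpace ℝ (Fin (d + 1))) (hαdef : α = EuclideanSpace.single 0 1)
    (hopen : ∀ x ∈ X, |⟪α, x⟫| < 1)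
    (s : ℕ) (hs : (X.image fun x => ⟪α, x⟫).card = s) :
    ∀ β ∈ X.image fun x => ⟪α, x⟫,
      IsSphericalDesign (t + 1 - s)
        ((X.filter fun x => ⟪α, x⟫ = β).image
          fun x => (WithLp.toLp 2 (fun i : Fin d => x i.succ / Real.sqrt (1 - β ^ 2)) :
            EuclideanSpace ℝ (Fin d))) := by
  have hinner : ∀ x : EuclideanSpace ℝ (Fin (d + 1)), ⟪α, x⟫ = x 0 := fun x => by
    simp [hαdef, EuclideanSpace.inner_single_left]
  simp only [hinner] at hopen hs ⊢
  intro β hβ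
  obtain ⟨x, hx, rfl⟩ := mem_image.mp hβ
  have hscale : (fun y : EuclideanSpace ℝ (Fin (d + 1)) =>
      (WithLp.toLp 2 (fun i : Fin d => y i.succ / √(1 - x 0 ^ 2)) : EuclideanSpace ℝ (Fin d)))
      = fun y => (√(1 - x 0 ^ 2))⁻¹ • tail y := by
    funext y
    ext i
    simp [div_eq_inv_mul]
  rw [hscale, ← hs]
  exact hdesign.image_smul_tail_filter hβ (hopen x hx)

theorem stmt8 (d t : ℕ) [DecidableEq (EuclideanSpace ℝ (Fin d))]
    (X : Finset (EuclideanSpace ℝ (Fin (d + 1))))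
    (hdesign : IsSphericalDesign t X)
    (α : EuclideanSpace ℝ (Fin (d + 1))) (hαdef : α = EuclideanSpace.single 0 1)
    (hα : α ∉ X) (hα' : -α ∉ X)
    (hopen : ∀ x ∈ X, |⟪α, x⟫| < 1)
    (s : ℕ) (hs : (X.image fun x => ⟪α, x⟫).card = s) :
    ∀ β ∈ X.image fun x => ⟪α, x⟫,
      IsSphericalDesign (t + 1 - s)
        ((X.filter fun x => ⟪α, x⟫ = β).image
          fun x => (WithLp.toLp 2 (fun i : Fin d => x i.succ / Real.sqrt (1 - β ^ 2)) :
            EuclideanSpace ℝ (Fin d))) :=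
  stmt8_general d t X hdesign α hαdef hopen s hs
end

section
/- Let Y = {y₁,…,y_n} ⊆ S^{l-1} be a tight frame (∑ yᵢyᵢᵀ = (n/l)·I) with exactly two distinct inner products a and b among distinct elements, where a² ≠ b². Define a graph G on {1,…,n} by joining i and j when ⟨yᵢ,yⱼ⟩ = a. Then G is regular, and its valency equals n_a = ((n/l) − 1 − (n−1)b²)/(a² − b²). -/
/-!
Fix `x ∈ Y`. Tightness at `v = x` gives `∑_{y ∈ Y} ⟪x, y⟫² = n / l`, and removing the term
`⟪x, x⟫² = 1` leaves `n / l - 1`. Each of the `n - 1` remaining squares is `a²` or `b²`, so this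
sum is `n_a a² + (n - 1 - n_a) b²`, which determines `n_a` because `a² ≠ b²`.
-/

open scoped RealInnerProductSpace

open Finset

lemma sum_sq_eq_card_mul_add_card_filter_mul {α : Type*} (s : Finset α) {f : α → ℝ} {a b : ℝ}
    (h : ∀ z ∈ s, f z = a ∨ f z = b) :
    ∑ z ∈ s, f z ^ 2 = #s * b ^ 2 + #(s.filter (f · = a)) * (a ^ 2 - b ^ 2) := by
  have hpoint : ∀ z ∈ s, f z ^ 2 = b ^ 2 + (if f z = a then 1 else 0) * (a ^ 2 - b ^ 2) := by
    intro z hz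
    split_ifs with hza
    · rw [hza]; ring
    · rw [(h z hz).resolve_left hza]; ring
  rw [sum_congr rfl hpoint, sum_add_distrib, ← sum_mul, sum_const, sum_boole, nsmul_eq_mul]

lemma card_filter_eq_div_of_forall_eq_or_eq {α : Type*} (s : Finset α) {f : α → ℝ} {a b : ℝ}
    (hab : a ^ 2 ≠ b ^ 2) (h : ∀ z ∈ s, f z = a ∨ f z = b) :
    (#(s.filter (f · = a)) : ℝ) = (∑ z ∈ s, f z ^ 2 - #s * b ^ 2) / (a ^ 2 - b ^ 2) := by
  rw [sum_sq_eq_card_mul_add_card_filter_mul s h, eq_div_iff (sub_ne_zero.mpr hab)]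
  ring

lemma sum_erase_inner_sq_of_tight_frame {E : Type*} [NormedAddCommGroup E]
    [InnerProductSpace ℝ E] [DecidableEq E] {Y : Finset E} {c : ℝ}
    (htf : ∀ v : E, ∑ y ∈ Y, ⟪v, y⟫ ^ 2 = c * ⟪v, v⟫) {x : E} (hx : x ∈ Y) (hx1 : ‖x‖ = 1) :
    ∑ y ∈ Y.erase x, ⟪x, y⟫ ^ 2 = c - 1 := by
  have hxx : ⟪x, x⟫ = 1 := by rw [real_inner_self_eq_norm_sq, hx1, one_pow]
  rw [sum_erase_eq_sub hx, htf x, hxx]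
  ring

theorem stmt15_general (l : ℕ) [DecidableEq (EuclideanSpace ℝ (Fin l))]
    (Y : Finset (EuclideanSpace ℝ (Fin l)))
    (hunit : ∀ y ∈ Y, ‖y‖ = 1)
    (htf : ∀ v : EuclideanSpace ℝ (Fin l),
      ∑ y ∈ Y, ⟪v, y⟫ ^ 2 = ((Y.card : ℝ) / l) * ⟪v, v⟫)
    (a b : ℝ) (hab : a ^ 2 ≠ b ^ 2)
    (hang : ∀ x ∈ Y, ∀ y ∈ Y, x ≠ y → ⟪x, y⟫ = a ∨ ⟪x, y⟫ = b) :
    ∀ x ∈ Y, ((Y.filter fun z => z ≠ x ∧ ⟪x, z⟫ = a).card : ℝ)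
      = ((Y.card : ℝ) / l - 1 - ((Y.card : ℝ) - 1) * b ^ 2) / (a ^ 2 - b ^ 2) := by
  intro x hx
  have hneighbours :
      (Y.filter fun z => z ≠ x ∧ ⟪x, z⟫ = a) = (Y.erase x).filter (⟪x, ·⟫ = a) := by
    rw [← filter_ne' Y x, filter_filter]
  have hang_x : ∀ z ∈ Y.erase x, ⟪x, z⟫ = a ∨ ⟪x, z⟫ = b := fun z hz =>
    hang x hx z (mem_of_mem_erase hz) (ne_of_mem_erase hz).symm
  rw [hneighbours, card_filter_eq_div_of_forall_eq_or_eq _ hab hang_x,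
    sum_erase_inner_sq_of_tight_frame htf hx (hunit x hx), cast_card_erase_of_mem hx]

theorem stmt15 (l : ℕ) (hl : 0 < l) [DecidableEq (EuclideanSpace ℝ (Fin l))]
    (Y : Finset (EuclideanSpace ℝ (Fin l)))
    (hunit : ∀ y ∈ Y, ‖y‖ = 1)
    (htf : ∀ v : EuclideanSpace ℝ (Fin l),
      ∑ y ∈ Y, ⟪v, y⟫ ^ 2 = ((Y.card : ℝ) / l) * ⟪v, v⟫)
    (a b : ℝ) (hab : a ^ 2 ≠ b ^ 2)
    (hang : ∀ x ∈ Y, ∀ y ∈ Y, x ≠ y → ⟪x, y⟫ = a ∨ ⟪x, y⟫ = b)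
    (haocc : ∃ x ∈ Y, ∃ y ∈ Y, x ≠ y ∧ ⟪x, y⟫ = a)
    (hbocc : ∃ x ∈ Y, ∃ y ∈ Y, x ≠ y ∧ ⟪x, y⟫ = b) :
    ∀ x ∈ Y, ((Y.filter fun z => z ≠ x ∧ ⟪x, z⟫ = a).card : ℝ)
      = ((Y.card : ℝ) / l - 1 - ((Y.card : ℝ) - 1) * b ^ 2) / (a ^ 2 - b ^ 2) :=
  stmt15_general l Y hunit htf a b hab hang
end

section
/- Suppose X₁, X₂, X₃ are finite subsets of S^{d-2} (d > 4) with X₃ = −X₁, X₂ = −X₂, |X₁| = |X₃| = (d+2)n/(3d), |X₂| = 4(d−1)n/(3d), and angle sets A(X₁), A(X₃) ⊆ {−3/(d−1), ((d+2)α−3)/(d−1), (−(d+2)α−3)/(d−1)}, A(X₂) ⊆ {−1, 0, ±α}, A(X₁,X₂), A(X₂,X₃) ⊆ {0, ±√((d+2)/(d−1))·α}, A(X₁,X₃) ⊆ {−1, 3/(d−1), ((d+2)α+3)/(d−1), (−(d+2)α+3)/(d−1)}, where α = √((3n − d(d+2))/((d+2)(n−d))). Define D = X̃₁ ∪ X̃₂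 ∪ X̃₃ ⊆ S^{d-1}, where X̃₁ = {(√(3/(d+2)), √((d−1)/(d+2))·x) : x ∈ X₁}, X̃₂ = {(0,x) : x ∈ X₂}, X̃₃ = −X̃₁. Then D is antipodal (D = −D), |D| = 2n, and the set of inner products between distinct points of D is contained in {−1, 0, ±α}. -/
open scoped RealInnerProductSpace

/-!
Lifted points satisfy `⟪(β, γ x), (β', γ' y)⟫ = β β' + γ γ' ⟪x, y⟫`. For the lift
`x ↦ (√(3/(d+2)), √((d-1)/(d+2)) x)` of `X₁` this is `(3 + (d-1)⟪x, y⟫)/(d+2)`, which sends the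
three admissible angles of `X₁` to `0, α, -α`; against `(0, y)` with `y ∈ X₂` it is
`⟪x, y⟫ / √((d+2)/(d-1))`, again in `{0, ±α}`. Pairs involving `-X̃₁` give the negatives of
these, except `⟪x̃, -x̃⟫ = -1`. The three pieces of `D` have first coordinates of sign `+, 0, -`,
so they are disjoint and `|D| = 2|X₁| + |X₂| = 2n`.
-/

section ConsLift

variable {e : ℕ}

def consLift (a b : ℝ) (x : EuclideanSpace ℝ (Fin e)) : EuclideanSpace ℝ (Fin (e + 1)) :=
  WithLp.toLp 2 (Fin.cons a fun i => b * x i)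

@[simp]
lemma consLift_apply_zero (a b : ℝ) (x : EuclideanSpace ℝ (Fin e)) : consLift a b x 0 = a := by
  simp [consLift]

@[simp]
lemma consLift_apply_succ (a b : ℝ) (x : EuclideanSpace ℝ (Fin e)) (i : Fin e) :
    consLift a b x i.succ = b * x i := by
  simp [consLift]

lemma inner_consLift (a a' b b' : ℝ) (x y : EuclideanSpace ℝ (Fin e)) :
    ⟪consLift a b x, consLift a' b' y⟫ = a * a' + b * b' * ⟪x, y⟫ := by
  simp only [PiLp.inner_apply, RCLike.inner_apply, conj_trivial, Fin.sum_univ_succ,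
    consLift_apply_zero, consLift_apply_succ, Finset.mul_sum]
  congr 1
  · ring
  · exact Finset.sum_congr rfl fun i _ => by ring

lemma neg_consLift (a b : ℝ) (x : EuclideanSpace ℝ (Fin e)) :
    -consLift a b x = consLift (-a) b (-x) := by
  ext i
  refine Fin.cases ?_ (fun j => ?_) i <;> simp

lemma consLift_injective (a : ℝ) {b : ℝ} (hb : b ≠ 0) :
    Function.Injective (consLift (e := e) a b) := by
  intro x y h
  ext i
  simpa [hb] using congrArg (· i.succ) h

/-- The paper's `x ↦ (√(3/(d+2)), √((d-1)/(d+2)) x)`, mapping `S^{d-2}` into `S^{d-1}`. -/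
noncomputable def capLift (d : ℝ) : EuclideanSpace ℝ (Fin e) → EuclideanSpace ℝ (Fin (e + 1)) :=
  consLift √(3 / (d + 2)) √((d - 1) / (d + 2))

variable {d : ℝ}

lemma capLift_injective (hd : 1 < d) : Function.Injective (capLift (e := e) d) :=
  consLift_injective _ (Real.sqrt_pos.2 (div_pos (by linarith) (by linarith))).ne'

lemma inner_capLift (hd : 1 < d) (x y : EuclideanSpace ℝ (Fin e)) :
    ⟪capLift d x, capLift d y⟫ = (3 + (d - 1) * ⟪x, y⟫) / (d + 2) := by
  rw [capLift, inner_consLift, Real.mul_self_sqrt (by positivity),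
    Real.mul_self_sqrt (div_nonneg (by linarith) (by linarith))]
  ring

lemma inner_capLift_self (hd : 1 < d) {x : EuclideanSpace ℝ (Fin e)} (hx : ‖x‖ = 1) :
    ⟪capLift d x, capLift d x⟫ = 1 := by
  rw [inner_capLift hd, real_inner_self_eq_norm_sq, hx]
  field_simp
  ring

lemma inner_capLift_consLift (x y : EuclideanSpace ℝ (Fin e)) :
    ⟪capLift d x, consLift 0 1 y⟫ = ⟪x, y⟫ / √((d + 2) / (d - 1)) := by
  rw [capLift, inner_consLift, ← inv_div (d + 2) (d - 1), Real.sqrt_inv]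
  ring

end ConsLift

section ZeroPlusMinus

variable {a t : ℝ}

lemma neg_mem_zero_pm (ht : t ∈ ({0, a, -a} : Set ℝ)) : -t ∈ ({0, a, -a} : Set ℝ) := by
  rcases ht with rfl | rfl | rfl <;> simp

lemma div_mem_zero_pm {c : ℝ} (hc : c ≠ 0) (ht : t ∈ ({0, c * a, -(c * a)} : Set ℝ)) :
    t / c ∈ ({0, a, -a} : Set ℝ) := by
  rcases ht with rfl | rfl | rfl <;> simp [hc, neg_div]

lemma zero_pm_subset (a : ℝ) : ({0, a, -a} : Set ℝ) ⊆ {-1, 0, a, -a} :=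
  Set.subset_insert _ _

lemma lift_angle_mem {d α : ℝ} (hd : 1 < d)
    (ht : t ∈ ({-3 / (d - 1), ((d + 2) * α - 3) / (d - 1), (-((d + 2) * α) - 3) / (d - 1)} :
      Set ℝ)) :
    (3 + (d - 1) * t) / (d + 2) ∈ ({0, α, -α} : Set ℝ) := by
  have h₁ : d - 1 ≠ 0 := by linarith
  have h₂ : d + 2 ≠ 0 := by linarith
  simp only [Set.mem_insert_iff, Set.mem_singleton_iff]
  rcases ht with rfl | rfl | rfl
  · left; field_simp; ring
  · right; left; field_simp; ring
  · right; right; field_simp; ring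

end ZeroPlusMinus

section UnionNeg

variable {V : Type*}

lemma neg_mem_union_union_image_neg [DecidableEq V] [InvolutiveNeg V] {A B : Finset V}
    (hB : ∀ b ∈ B, -b ∈ B) :
    ∀ p ∈ A ∪ B ∪ A.image (fun v => -v), -p ∈ A ∪ B ∪ A.image (fun v => -v) := by
  simp only [Finset.mem_union, Finset.mem_image]
  rintro p ((hp | hp) | ⟨a, ha, rfl⟩)
  · exact Or.inr ⟨p, hp, rfl⟩
  · exact Or.inl (Or.inr (hB p hp))
  · exact Or.inl (Or.inl (by rwa [neg_neg]))

lemma card_union_union_image_neg [DecidableEq V] [AddGroup V] {A B : Finset V} (φ : V → ℝ)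
    (hφ : ∀ v, φ (-v) = -φ v) (hA : ∀ a ∈ A, 0 < φ a) (hB : ∀ b ∈ B, φ b = 0) :
    (A ∪ B ∪ A.image (fun v => -v)).card = 2 * A.card + B.card := by
  have hAB : Disjoint A B := Finset.disjoint_left.2 fun a ha hb => (hA a ha).ne' (hB a hb)
  have hABA : Disjoint (A ∪ B) (A.image fun v => -v) := by
    simp only [Finset.disjoint_left, Finset.mem_union, Finset.mem_image]
    rintro p (hp | hp) ⟨a, ha, rfl⟩
    · linarith [hA _ hp, hA a ha, hφ a]
    · linarith [hB _ hp, hA a ha, hφ a]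
  rw [Finset.card_union_of_disjoint hABA, Finset.card_union_of_disjoint hAB,
    Finset.card_image_of_injective _ neg_injective]
  ring

variable [NormedAddCommGroup V] [InnerProductSpace ℝ V]

/-- For `x = y` the value is read off from `⟪x, -x⟫ = -1`. -/
lemma inner_mem_zero_pm_of_ne {X Y : Finset V} {a : ℝ} (hX : ∀ x ∈ X, ‖x‖ = 1)
    (hY : ∀ y ∈ Y, -y ∈ Y) (h : ∀ x ∈ X, ∀ y ∈ Y, x ≠ y → ⟪x, y⟫ ∈ ({0, a, -a} : Set ℝ)) :
    ∀ x ∈ X, ∀ y ∈ Y, ⟪x, y⟫ ∈ ({0, a, -a} : Set ℝ) := by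
  intro x hx y hy
  obtain rfl | hxy := eq_or_ne x y
  · have hne : x ≠ -x := fun hneg => by
      have h' := congrArg (⟪x, ·⟫) hneg
      simp only [inner_neg_right, real_inner_self_eq_norm_sq, hX x hx] at h'
      norm_num at h'
    simpa [inner_neg_right] using neg_mem_zero_pm (h x hx (-x) (hY x hy) hne)
  · exact h x hx y hy hxy

lemma inner_mem_of_mem_union_union_image_neg [DecidableEq V] {A B : Finset V} {S T : Set ℝ}
    (hST : S ⊆ T) (hS : ∀ t ∈ S, -t ∈ S) (hT : -1 ∈ T)
    (hA : ∀ a ∈ A, ⟪a, a⟫ = 1)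
    (hAA : ∀ a ∈ A, ∀ a' ∈ A, a ≠ a' → ⟪a, a'⟫ ∈ S)
    (hAB : ∀ a ∈ A, ∀ b ∈ B, ⟪a, b⟫ ∈ S)
    (hBB : ∀ b ∈ B, ∀ b' ∈ B, b ≠ b' → ⟪b, b'⟫ ∈ T) :
    ∀ p ∈ A ∪ B ∪ A.image (fun v => -v), ∀ q ∈ A ∪ B ∪ A.image (fun v => -v), p ≠ q →
      ⟪p, q⟫ ∈ T := by
  have hAnegA : ∀ a ∈ A, ∀ a' ∈ A, ⟪a, -a'⟫ ∈ T := by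
    intro a ha a' ha'
    rw [inner_neg_right]
    obtain rfl | hne := eq_or_ne a a'
    · rwa [hA a ha]
    · exact hST (hS _ (hAA a ha a' ha' hne))
  simp only [Finset.mem_union, Finset.mem_image]
  rintro p ((hp | hp) | ⟨a, hp, rfl⟩) q ((hq | hq) | ⟨a', hq, rfl⟩) hpq
  · exact hST (hAA p hp q hq hpq)
  · exact hST (hAB p hp q hq)
  · exact hAnegA p hp a' hq
  · exact real_inner_comm p q ▸ hST (hAB q hq p hp)
  · exact hBB p hp q hq hpq
  · rw [inner_neg_right, real_inner_comm]
    exact hST (hS _ (hAB a' hq p hp))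
  · exact real_inner_comm (-a) q ▸ hAnegA q hq a hp
  · rw [inner_neg_left]
    exact hST (hS _ (hAB a hp q hq))
  · rw [inner_neg_neg]
    exact hST (hAA a hp a' hq (fun h => hpq (h ▸ rfl)))

end UnionNeg

theorem stmt16_general (e d n : ℕ) (hd4 : 4 < d)
    [DecidableEq (EuclideanSpace ℝ (Fin e))]
    [DecidableEq (EuclideanSpace ℝ (Fin (e + 1)))]
    (X₁ X₂ : Finset (EuclideanSpace ℝ (Fin e)))
    (hunit₁ : ∀ x ∈ X₁, ‖x‖ = 1)
    (hX₂ : X₂ = X₂.image fun x => -x)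
    (hcard₁ : 3 * d * X₁.card = (d + 2) * n)
    (hcard₂ : 3 * d * X₂.card = 4 * (d - 1) * n)
    (α : ℝ)
    (hA₁ : ∀ x ∈ X₁, ∀ y ∈ X₁, x ≠ y → ⟪x, y⟫ ∈
      ({-3 / ((d : ℝ) - 1), (((d : ℝ) + 2) * α - 3) / ((d : ℝ) - 1),
        (-(((d : ℝ) + 2) * α) - 3) / ((d : ℝ) - 1)} : Set ℝ))
    (hA₂ : ∀ x ∈ X₂, ∀ y ∈ X₂, x ≠ y → ⟪x, y⟫ ∈ ({-1, 0, α, -α} : Set ℝ))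
    (hA₁₂ : ∀ x ∈ X₁, ∀ y ∈ X₂, x ≠ y → ⟪x, y⟫ ∈
      ({0, Real.sqrt (((d : ℝ) + 2) / ((d : ℝ) - 1)) * α,
        -(Real.sqrt (((d : ℝ) + 2) / ((d : ℝ) - 1)) * α)} : Set ℝ))
    (D : Finset (EuclideanSpace ℝ (Fin (e + 1))))
    (hD : D = (X₁.image fun x =>
        (WithLp.toLp 2 (Fin.cons (Real.sqrt (3 / ((d : ℝ) + 2)))
          (fun i => Real.sqrt (((d : ℝ) - 1) / ((d : ℝ) + 2)) * x i) : Fin (e + 1) → ℝ) :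
          EuclideanSpace ℝ (Fin (e + 1))))
      ∪ (X₂.image fun x =>
        (WithLp.toLp 2 (Fin.cons (0 : ℝ) (fun i => x i) : Fin (e + 1) → ℝ) : EuclideanSpace ℝ (Fin (e + 1))))
      ∪ ((X₁.image fun x =>
        (WithLp.toLp 2 (Fin.cons (Real.sqrt (3 / ((d : ℝ) + 2)))
          (fun i => Real.sqrt (((d : ℝ) - 1) / ((d : ℝ) + 2)) * x i) : Fin (e + 1) → ℝ) :
          EuclideanSpace ℝ (Fin (e + 1)))).image fun v => -v)) :
    (∀ p ∈ D, -p ∈ D) ∧ D.card = 2 * n ∧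
      ∀ p ∈ D, ∀ q ∈ D, p ≠ q → ⟪p, q⟫ ∈ ({-1, 0, α, -α} : Set ℝ) := by
  have hd : (1 : ℝ) < d := by exact_mod_cast (by omega : 1 < d)
  have hX₂neg : ∀ x ∈ X₂, -x ∈ X₂ := fun x hx => by
    rw [hX₂]
    exact Finset.mem_image_of_mem _ hx
  have hcard : 2 * X₁.card + X₂.card = 2 * n := by
    obtain ⟨k, rfl⟩ : ∃ k, d = k + 1 := ⟨d - 1, by omega⟩
    rw [Nat.add_sub_cancel] at hcard₂
    refine Nat.eq_of_mul_eq_mul_left (by omega : 0 < 3 * (k + 1)) ?_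
    linear_combination 2 * hcard₁ + hcard₂
  obtain rfl : D = X₁.image (capLift d) ∪ X₂.image (consLift 0 1) ∪
      (X₁.image (capLift d)).image (fun v => -v) := by
    rw [hD]
    congr! 3
    funext x
    simp [consLift]
  refine ⟨neg_mem_union_union_image_neg (Finset.forall_mem_image.2 fun y hy => ?_), ?_, ?_⟩
  · exact Finset.mem_image.2 ⟨-y, hX₂neg y hy, by rw [neg_consLift, neg_zero]⟩
  · rwa [card_union_union_image_neg (· 0) (fun _ => rfl)
      (Finset.forall_mem_image.2 fun _ _ => by simp [capLift]; positivity) (by simp),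
      Finset.card_image_of_injective _ (capLift_injective hd),
      Finset.card_image_of_injective _ (consLift_injective _ one_ne_zero)]
  · refine inner_mem_of_mem_union_union_image_neg (zero_pm_subset α)
      (fun _ => neg_mem_zero_pm) (by simp) ?_ ?_ ?_ ?_ <;> simp only [Finset.forall_mem_image]
    · exact fun x hx => inner_capLift_self hd (hunit₁ x hx)
    · exact fun x hx y hy hxy => inner_capLift hd x y ▸
        lift_angle_mem hd (hA₁ x hx y hy (ne_of_apply_ne _ hxy))
    · exact fun x hx y hy => inner_capLift_consLift x y ▸ div_mem_zero_pm (by positivity)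
        (inner_mem_zero_pm_of_ne hunit₁ hX₂neg hA₁₂ x hx y hy)
    · intro x hx y hy hxy
      simpa [inner_consLift] using hA₂ x hx y hy (ne_of_apply_ne _ hxy)

theorem stmt16 (e d n : ℕ) (hde : d = e + 1) (hd4 : 4 < d)
    [DecidableEq (EuclideanSpace ℝ (Fin e))]
    [DecidableEq (EuclideanSpace ℝ (Fin (e + 1)))]
    (X₁ X₂ X₃ : Finset (EuclideanSpace ℝ (Fin e)))
    (hunit₁ : ∀ x ∈ X₁, ‖x‖ = 1) (hunit₂ : ∀ x ∈ X₂, ‖x‖ = 1)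
    (hunit₃ : ∀ x ∈ X₃, ‖x‖ = 1)
    (hX₃ : X₃ = X₁.image fun x => -x)
    (hX₂ : X₂ = X₂.image fun x => -x)
    (hcard₁ : 3 * d * X₁.card = (d + 2) * n)
    (hcard₃ : X₃.card = X₁.card)
    (hcard₂ : 3 * d * X₂.card = 4 * (d - 1) * n)
    (α : ℝ)
    (hα : α = Real.sqrt ((3 * (n : ℝ) - d * ((d : ℝ) + 2)) / (((d : ℝ) + 2) * ((n : ℝ) - d))))
    (hA₁ : ∀ x ∈ X₁, ∀ y ∈ X₁, x ≠ y → ⟪x, y⟫ ∈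
      ({-3 / ((d : ℝ) - 1), (((d : ℝ) + 2) * α - 3) / ((d : ℝ) - 1),
        (-(((d : ℝ) + 2) * α) - 3) / ((d : ℝ) - 1)} : Set ℝ))
    (hA₃ : ∀ x ∈ X₃, ∀ y ∈ X₃, x ≠ y → ⟪x, y⟫ ∈
      ({-3 / ((d : ℝ) - 1), (((d : ℝ) + 2) * α - 3) / ((d : ℝ) - 1),
        (-(((d : ℝ) + 2) * α) - 3) / ((d : ℝ) - 1)} : Set ℝ))
    (hA₂ : ∀ x ∈ X₂, ∀ y ∈ X₂, x ≠ y → ⟪x, y⟫ ∈ ({-1, 0, α, -α} : Set ℝ))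
    (hA₁₂ : ∀ x ∈ X₁, ∀ y ∈ X₂, x ≠ y → ⟪x, y⟫ ∈
      ({0, Real.sqrt (((d : ℝ) + 2) / ((d : ℝ) - 1)) * α,
        -(Real.sqrt (((d : ℝ) + 2) / ((d : ℝ) - 1)) * α)} : Set ℝ))
    (hA₂₃ : ∀ x ∈ X₂, ∀ y ∈ X₃, x ≠ y → ⟪x, y⟫ ∈
      ({0, Real.sqrt (((d : ℝ) + 2) / ((d : ℝ) - 1)) * α,
        -(Real.sqrt (((d : ℝ) + 2) / ((d : ℝ) - 1)) * α)} : Set ℝ))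
    (hA₁₃ : ∀ x ∈ X₁, ∀ y ∈ X₃, x ≠ y → ⟪x, y⟫ ∈
      ({-1, 3 / ((d : ℝ) - 1), (((d : ℝ) + 2) * α + 3) / ((d : ℝ) - 1),
        (-(((d : ℝ) + 2) * α) + 3) / ((d : ℝ) - 1)} : Set ℝ))
    (D : Finset (EuclideanSpace ℝ (Fin (e + 1))))
    (hD : D = (X₁.image fun x =>
        (WithLp.toLp 2 (Fin.cons (Real.sqrt (3 / ((d : ℝ) + 2)))
          (fun i => Real.sqrt (((d : ℝ) - 1) / ((d : ℝ) + 2)) * x i) : Fin (e + 1) → ℝ) :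
          EuclideanSpace ℝ (Fin (e + 1))))
      ∪ (X₂.image fun x =>
        (WithLp.toLp 2 (Fin.cons (0 : ℝ) (fun i => x i) : Fin (e + 1) → ℝ) : EuclideanSpace ℝ (Fin (e + 1))))
      ∪ ((X₁.image fun x =>
        (WithLp.toLp 2 (Fin.cons (Real.sqrt (3 / ((d : ℝ) + 2)))
          (fun i => Real.sqrt (((d : ℝ) - 1) / ((d : ℝ) + 2)) * x i) : Fin (e + 1) → ℝ) :
          EuclideanSpace ℝ (Fin (e + 1)))).image fun v => -v)) :
    (∀ p ∈ D, -p ∈ D) ∧ D.card = 2 * n ∧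
      ∀ p ∈ D, ∀ q ∈ D, p ≠ q → ⟪p, q⟫ ∈ ({-1, 0, α, -α} : Set ℝ) :=
  stmt16_general e d n hd4 X₁ X₂ hunit₁ hX₂ hcard₁ hcard₂ α hA₁ hA₂ hA₁₂ D hD
end
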